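/- Let ℏ, m > 0 and identify ℝ × ℝ³ with ℝ⁴ via x₀ = t, (x₁,x₂,x₃) = x. For a,b ∈ {0,1,2,3} define G_{ab}φ(t,x) = x_a ∂_b φ(t,x) on smooth φ : ℝ × ℝ³ → ℂ. Then for all a, b and all smooth φ, the second-order commutator with the free Schrödinger operator vanishes: [L_s,[L_s, G_{ab}]]φ = L_s(L_s(G_{ab}φ)) − 2 L_s(G_{ab}(L_sφ)) + G_{ab}(L_s(L_sφ)) = 0. (Hence all 20 generators P_a, G_{ab} of IGL(4,ℝ) are symmetry operators of the free Schrödinger equation of type p = 2.) -/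

import Mathlib

open Complex

/-- Partial derivative in the `i`-th coordinate direction on `ℝ⁴`. -/
noncomputable def pd (i : Fin 4) (f : (Fin 4 → ℝ) → ℂ) : (Fin 4 → ℝ) → ℂ :=
  fun x => fderiv ℝ f x (Pi.single i 1)

/-- The free Schrödinger operator `L_s φ = iℏ ∂_t φ + (ℏ²/(2m)) Δφ`,
with time variable `x 0` and space variables `x 1, x 2, x 3`. -/
noncomputable def Ls (hbar m : ℝ) (f : (Fin 4 → ℝ) → ℂ) : (Fin 4 → ℝ) → ℂ :=
  fun x => Complex.I * (hbar : ℂ) * pd 0 f x +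
    ((hbar ^ 2 / (2 * m) : ℝ) : ℂ) *
      (pd 1 (pd 1 f) x + pd 2 (pd 2 f) x + pd 3 (pd 3 f) x)

/-- The linear generator `G_{ab} φ = x_a ∂_b φ`. -/
noncomputable def Gop (a b : Fin 4) (f : (Fin 4 → ℝ) → ℂ) : (Fin 4 → ℝ) → ℂ :=
  fun x => (x a : ℂ) * pd b f x

lemma contDiff_pd {f : (Fin 4 → ℝ) → ℂ} (hf : ContDiff ℝ (⊤ : ℕ∞) f) (i : Fin 4) :
    ContDiff ℝ (⊤ : ℕ∞) (pd i f) := by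
  have h1 : ContDiff ℝ (⊤ : ℕ∞) (fderiv ℝ f) := hf.fderiv_right (by simp)
  exact h1.clm_apply contDiff_const

lemma diff_pd {f : (Fin 4 → ℝ) → ℂ} (hf : ContDiff ℝ (⊤ : ℕ∞) f) (i : Fin 4) :
    Differentiable ℝ (pd i f) := (contDiff_pd hf i).differentiable (by simp)

lemma pd_add {f g : (Fin 4 → ℝ) → ℂ} (hf : Differentiable ℝ f)
    (hg : Differentiable ℝ g) (i : Fin 4) :
    pd i (fun x => f x + g x) = fun x => pd i f x + pd i g x := by
  funext x
  simp only [pd]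
  rw [fderiv_fun_add (hf x) (hg x)]
  simp

lemma pd_const_mul (c : ℂ) {f : (Fin 4 → ℝ) → ℂ} (hf : Differentiable ℝ f) (i : Fin 4) :
    pd i (fun x => c * f x) = fun x => c * pd i f x := by
  funext x
  simp only [pd]
  rw [fderiv_const_mul (hf x) c]
  simp

lemma pd_comm {f : (Fin 4 → ℝ) → ℂ} (hf : ContDiff ℝ (⊤ : ℕ∞) f) (i j : Fin 4) :
    pd i (pd j f) = pd j (pd i f) := by
  funext x
  have hd : Differentiable ℝ (fderiv ℝ f) :=
    (hf.fderiv_right (m := (⊤ : ℕ∞)) (by simp)).differentiable (by simp)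
  have key : ∀ v w : Fin 4 → ℝ,
      fderiv ℝ (fun y => fderiv ℝ f y v) x w = fderiv ℝ (fderiv ℝ f) x w v := by
    intro v w
    have : fderiv ℝ (fun y => (fderiv ℝ f y) ((fun _ => v) y)) x =
        (fderiv ℝ f x).comp (fderiv ℝ (fun _ : Fin 4 → ℝ => v) x) +
          (fderiv ℝ (fderiv ℝ f) x).flip v :=
      fderiv_clm_apply (hd x) (differentiableAt_const v)
    simp only [fderiv_fun_const, Pi.zero_apply, ContinuousLinearMap.comp_zero, zero_add] at this
    simp only [this, ContinuousLinearMap.flip_apply]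
  have hsymm := second_derivative_symmetric (f := f) (f' := fderiv ℝ f)
    (f'' := fderiv ℝ (fderiv ℝ f) x) (x := x)
    (fun y => ((hf.differentiable (by simp)) y).hasFDerivAt) ((hd x).hasFDerivAt)
  change fderiv ℝ (fun y => fderiv ℝ f y (Pi.single j 1)) x (Pi.single i 1) =
    fderiv ℝ (fun y => fderiv ℝ f y (Pi.single i 1)) x (Pi.single j 1)
  rw [key, key, hsymm]

noncomputable def La (a : Fin 4) : (Fin 4 → ℝ) →L[ℝ] ℂ :=
  Complex.ofRealCLM.comp (ContinuousLinearMap.proj a)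

lemma La_coe (a : Fin 4) : ⇑(La a) = fun y : Fin 4 → ℝ => (y a : ℂ) := rfl

lemma La_single (a j : Fin 4) : La a (Pi.single j 1) = if a = j then 1 else 0 := by
  show ((((Pi.single j 1 : Fin 4 → ℝ)) a : ℝ) : ℂ) = _
  rw [Pi.single_apply]
  split <;> simp

lemma pd_xmul (a : Fin 4) {g : (Fin 4 → ℝ) → ℂ} (hg : Differentiable ℝ g) (j : Fin 4) :
    pd j (fun y => (y a : ℂ) * g y) =
      fun y => (if a = j then 1 else 0) * g y + (y a : ℂ) * pd j g y := by
  funext x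
  have hL : HasFDerivAt (fun y : Fin 4 → ℝ => (y a : ℂ)) (La a) x := by
    have h := (La a).hasFDerivAt (x := x)
    rwa [La_coe] at h
  have hmul := hL.mul (hg x).hasFDerivAt
  show fderiv ℝ (fun y => (y a : ℂ) * g y) x (Pi.single j 1) = _
  rw [show (fun y => (y a : ℂ) * g y) = (fun y => (y a : ℂ)) * g from rfl, hmul.fderiv]
  simp only [ContinuousLinearMap.add_apply, ContinuousLinearMap.smul_apply, smul_eq_mul,
    ContinuousLinearMap.comp_apply, ContinuousLinearMap.proj_apply, Complex.ofRealCLM_apply,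
    La_single, pd]
  by_cases h : a = j <;> simp [h] <;> ring

lemma diff_xmul (a : Fin 4) {g : (Fin 4 → ℝ) → ℂ} (hg : Differentiable ℝ g) :
    Differentiable ℝ (fun y => (y a : ℂ) * g y) :=
 by
  have h := (La a).differentiable
  rw [La_coe] at h
  exact h.mul hg

lemma contDiff_xmul (a : Fin 4) {g : (Fin 4 → ℝ) → ℂ} (hg : ContDiff ℝ (⊤ : ℕ∞) g) :
    ContDiff ℝ (⊤ : ℕ∞) (fun y => (y a : ℂ) * g y) :=
 by
  have h : ContDiff ℝ (⊤ : ℕ∞) (fun y : Fin 4 → ℝ => (y a : ℂ)) := by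
    rw [← La_coe]; exact (La a).contDiff
  exact h.mul hg

lemma contDiff_Gop (a b : Fin 4) {f : (Fin 4 → ℝ) → ℂ} (hf : ContDiff ℝ (⊤ : ℕ∞) f) :
    ContDiff ℝ (⊤ : ℕ∞) (Gop a b f) :=
  contDiff_xmul a (contDiff_pd hf b)

lemma contDiff_Ls (hbar m : ℝ) {f : (Fin 4 → ℝ) → ℂ} (hf : ContDiff ℝ (⊤ : ℕ∞) f) :
    ContDiff ℝ (⊤ : ℕ∞) (Ls hbar m f) := by
  unfold Ls
  exact (contDiff_const.mul (contDiff_pd hf 0)).add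
    (contDiff_const.mul (((contDiff_pd (contDiff_pd hf 1) 1).add
      (contDiff_pd (contDiff_pd hf 2) 2)).add (contDiff_pd (contDiff_pd hf 3) 3)))

noncomputable def Kop (k0 k1 k2 k3 : ℂ) (b : Fin 4) (f : (Fin 4 → ℝ) → ℂ) :
    (Fin 4 → ℝ) → ℂ :=
  fun x => k0 * pd b f x + k1 * pd 1 (pd b f) x + k2 * pd 2 (pd b f) x + k3 * pd 3 (pd b f) x

lemma contDiff_Kop (k0 k1 k2 k3 : ℂ) (b : Fin 4) {f : (Fin 4 → ℝ) → ℂ}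
    (hf : ContDiff ℝ (⊤ : ℕ∞) f) : ContDiff ℝ (⊤ : ℕ∞) (Kop k0 k1 k2 k3 b f) := by
  unfold Kop
  exact (((contDiff_const.mul (contDiff_pd hf b)).add
    (contDiff_const.mul (contDiff_pd (contDiff_pd hf b) 1))).add
    (contDiff_const.mul (contDiff_pd (contDiff_pd hf b) 2))).add
    (contDiff_const.mul (contDiff_pd (contDiff_pd hf b) 3))

lemma pd_Ls (hbar m : ℝ) {f : (Fin 4 → ℝ) → ℂ} (hf : ContDiff ℝ (⊤ : ℕ∞) f) (i : Fin 4) :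
    pd i (Ls hbar m f) = Ls hbar m (pd i f) := by
  have d0 : Differentiable ℝ (fun x => Complex.I * (hbar : ℂ) * pd 0 f x) :=
    (diff_pd hf 0).const_mul _
  have d1 : Differentiable ℝ (fun x => pd 1 (pd 1 f) x + pd 2 (pd 2 f) x) :=
    (diff_pd (contDiff_pd hf 1) 1).add (diff_pd (contDiff_pd hf 2) 2)
  have d2 : Differentiable ℝ (fun x => (pd 1 (pd 1 f) x + pd 2 (pd 2 f) x) + pd 3 (pd 3 f) x) :=
    d1.add (diff_pd (contDiff_pd hf 3) 3)
  have d3 : Differentiable ℝ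
      (fun x => ((hbar ^ 2 / (2 * m) : ℝ) : ℂ) *
        (pd 1 (pd 1 f) x + pd 2 (pd 2 f) x + pd 3 (pd 3 f) x)) := d2.const_mul _
  unfold Ls
  rw [pd_add d0 d3 i, pd_const_mul (Complex.I * (hbar : ℂ)) (diff_pd hf 0) i,
    pd_const_mul ((hbar ^ 2 / (2 * m) : ℝ) : ℂ) d2 i,
    pd_add d1 (diff_pd (contDiff_pd hf 3) 3) i,
    pd_add (diff_pd (contDiff_pd hf 1) 1) (diff_pd (contDiff_pd hf 2) 2) i,
    pd_comm hf i 0, pd_comm (contDiff_pd hf 1) i 1, pd_comm hf i 1,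
    pd_comm (contDiff_pd hf 2) i 2, pd_comm hf i 2,
    pd_comm (contDiff_pd hf 3) i 3, pd_comm hf i 3]

lemma pd_lincomb (k0 k1 k2 k3 : ℂ) {g0 g1 g2 g3 : (Fin 4 → ℝ) → ℂ}
    (h0 : Differentiable ℝ g0) (h1 : Differentiable ℝ g1) (h2 : Differentiable ℝ g2)
    (h3 : Differentiable ℝ g3) (j : Fin 4) :
    pd j (fun x => k0 * g0 x + k1 * g1 x + k2 * g2 x + k3 * g3 x) =
      fun x => k0 * pd j g0 x + k1 * pd j g1 x + k2 * pd j g2 x + k3 * pd j g3 x := by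
  rw [pd_add ((((h0.const_mul k0).fun_add (h1.const_mul k1))).fun_add (h2.const_mul k2))
      (h3.const_mul k3) j,
    pd_add ((h0.const_mul k0).fun_add (h1.const_mul k1)) (h2.const_mul k2) j,
    pd_add (h0.const_mul k0) (h1.const_mul k1) j,
    pd_const_mul k0 h0 j, pd_const_mul k1 h1 j, pd_const_mul k2 h2 j, pd_const_mul k3 h3 j]

lemma Ls_add (hbar m : ℝ) {f g : (Fin 4 → ℝ) → ℂ} (hf : ContDiff ℝ (⊤ : ℕ∞) f)
    (hg : ContDiff ℝ (⊤ : ℕ∞) g) :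
    Ls hbar m (fun x => f x + g x) = fun x => Ls hbar m f x + Ls hbar m g x := by
  unfold Ls
  rw [pd_add (hf.differentiable (by simp)) (hg.differentiable (by simp)) 0,
      pd_add (hf.differentiable (by simp)) (hg.differentiable (by simp)) 1,
      pd_add (diff_pd hf 1) (diff_pd hg 1) 1,
      pd_add (hf.differentiable (by simp)) (hg.differentiable (by simp)) 2,
      pd_add (diff_pd hf 2) (diff_pd hg 2) 2,
      pd_add (hf.differentiable (by simp)) (hg.differentiable (by simp)) 3,
      pd_add (diff_pd hf 3) (diff_pd hg 3) 3]
  funext x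
  ring

lemma comm1 (hbar m : ℝ) (a b : Fin 4) {f : (Fin 4 → ℝ) → ℂ} (hf : ContDiff ℝ (⊤ : ℕ∞) f) :
    Ls hbar m (Gop a b f) = fun x => Gop a b (Ls hbar m f) x +
      Kop (Complex.I * (hbar : ℂ) * (if a = 0 then 1 else 0))
          (((hbar ^ 2 / (2 * m) : ℝ) : ℂ) * (2 * (if a = 1 then 1 else 0)))
          (((hbar ^ 2 / (2 * m) : ℝ) : ℂ) * (2 * (if a = 2 then 1 else 0)))
          (((hbar ^ 2 / (2 * m) : ℝ) : ℂ) * (2 * (if a = 3 then 1 else 0))) b f x := by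
  have hb := contDiff_pd hf b
  have db := diff_pd hf b
  unfold Gop Kop
  rw [pd_Ls hbar m hf b]
  unfold Ls
  rw [pd_xmul a db 0, pd_xmul a db 1, pd_xmul a db 2, pd_xmul a db 3]
  rw [pd_add (db.const_mul _) (diff_xmul a (diff_pd hb 1)) 1,
      pd_add (db.const_mul _) (diff_xmul a (diff_pd hb 2)) 2,
      pd_add (db.const_mul _) (diff_xmul a (diff_pd hb 3)) 3]
  rw [pd_const_mul _ db 1, pd_const_mul _ db 2, pd_const_mul _ db 3]
  rw [pd_xmul a (diff_pd hb 1) 1, pd_xmul a (diff_pd hb 2) 2, pd_xmul a (diff_pd hb 3) 3]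
  funext x
  ring

lemma comm2 (hbar m : ℝ) (k0 k1 k2 k3 : ℂ) (b : Fin 4) {f : (Fin 4 → ℝ) → ℂ}
    (hf : ContDiff ℝ (⊤ : ℕ∞) f) :
    Ls hbar m (Kop k0 k1 k2 k3 b f) = Kop k0 k1 k2 k3 b (Ls hbar m f) := by
  have hb := contDiff_pd hf b
  have db := diff_pd hf b
  have d1 := diff_pd hb 1
  have d2 := diff_pd hb 2
  have d3 := diff_pd hb 3
  unfold Kop
  rw [pd_Ls hbar m hf b, pd_Ls hbar m hb 1, pd_Ls hbar m hb 2, pd_Ls hbar m hb 3]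
  unfold Ls
  rw [pd_lincomb k0 k1 k2 k3 db d1 d2 d3 0,
      pd_lincomb k0 k1 k2 k3 db d1 d2 d3 1,
      pd_lincomb k0 k1 k2 k3 db d1 d2 d3 2,
      pd_lincomb k0 k1 k2 k3 db d1 d2 d3 3,
      pd_lincomb k0 k1 k2 k3 (diff_pd hb 1) (diff_pd (contDiff_pd hb 1) 1)
        (diff_pd (contDiff_pd hb 2) 1) (diff_pd (contDiff_pd hb 3) 1) 1,
      pd_lincomb k0 k1 k2 k3 (diff_pd hb 2) (diff_pd (contDiff_pd hb 1) 2)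
        (diff_pd (contDiff_pd hb 2) 2) (diff_pd (contDiff_pd hb 3) 2) 2,
      pd_lincomb k0 k1 k2 k3 (diff_pd hb 3) (diff_pd (contDiff_pd hb 1) 3)
        (diff_pd (contDiff_pd hb 2) 3) (diff_pd (contDiff_pd hb 3) 3) 3]
  funext x
  ring

/-- the second-order commutator of the free Schrödinger operator
with each generator `G_{ab} = x_a ∂_b` of IGL(4,ℝ) vanishes identically:
`[L_s,[L_s,G_{ab}]]φ = L_s(L_s(G_{ab}φ)) − 2L_s(G_{ab}(L_sφ)) + G_{ab}(L_s(L_sφ)) = 0`. -/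
theorem stmt_11 (hbar m : ℝ) (hhbar : 0 < hbar) (hm : 0 < m) :
    ∀ a b : Fin 4, ∀ φ : (Fin 4 → ℝ) → ℂ, ContDiff ℝ (⊤ : ℕ∞) φ →
      ∀ x : Fin 4 → ℝ,
        Ls hbar m (Ls hbar m (Gop a b φ)) x
          - 2 * Ls hbar m (Gop a b (Ls hbar m φ)) x
          + Gop a b (Ls hbar m (Ls hbar m φ)) x = 0 := by
  intro a b φ hφ x
  have hψ : ContDiff ℝ (⊤ : ℕ∞) (Ls hbar m φ) := contDiff_Ls hbar m hφ
  have e1 := comm1 hbar m a b hφ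
  have e3x := congrFun (comm1 hbar m a b hψ) x
  have e4x := congrFun (comm2 hbar m
      (Complex.I * (hbar : ℂ) * (if a = 0 then 1 else 0))
      (((hbar ^ 2 / (2 * m) : ℝ) : ℂ) * (2 * (if a = 1 then 1 else 0)))
      (((hbar ^ 2 / (2 * m) : ℝ) : ℂ) * (2 * (if a = 2 then 1 else 0)))
      (((hbar ^ 2 / (2 * m) : ℝ) : ℂ) * (2 * (if a = 3 then 1 else 0))) b hφ) x
  rw [e1, Ls_add hbar m (contDiff_Gop a b hψ) (contDiff_Kop _ _ _ _ b hφ)]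
  linear_combination e4x - e3x
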